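/- For every subset K ⊆ N = {1,…,n} and every unipotent upper-triangular n×n matrix g over F: Ψ_K(g) = Σ_{λ} q^{nst_λ^λ + nst_{K∖epl(λ)}^λ} · X_λ(g), where the sum is over all set partitions λ of N with epl(λ) ⊆ K. -/

import Mathlib

open Finset

variable {F : Type*} [Field F] [Fintype F] [DecidableEq F]

/-- A set partition of `{1, …, n}` (modelled as `Fin n`), recorded as its set of arcs. -/
def IsSP (n : ℕ) (lam : Finset (Fin n × Fin n)) : Prop :=
  (∀ p ∈ lam, p.1 < p.2) ∧ ∀ p ∈ lam, ∀ q ∈ lam, (p.1 = q.1 ↔ p.2 = q.2)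

/-- The set of left endpoints. -/
def epl {n : ℕ} (lam : Finset (Fin n × Fin n)) : Finset (Fin n) := lam.image Prod.fst

/-- `nst_A^λ = #{((i,l), j) ∈ λ × A : i < j < l}`. -/
def nst {n : ℕ} (lam : Finset (Fin n × Fin n)) (A : Finset (Fin n)) : ℕ :=
  ((lam ×ˢ A).filter (fun x => x.1.1 < x.2 ∧ x.2 < x.1.2)).card

/-- `nst_λ^λ = #{((i,l), (j,k)) ∈ λ × λ : i < j < k < l}`. -/
def nstself {n : ℕ} (lam : Finset (Fin n × Fin n)) : ℕ :=
  ((lam ×ˢ lam).filter (fun x => x.1.1 < x.2.1 ∧ x.2.1 < x.2.2 ∧ x.2.2 < x.1.2)).card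

/-- The strictly lower-triangular part of a matrix. -/
def lowerPart {n : ℕ} (x : Matrix (Fin n) (Fin n) F) : Matrix (Fin n) (Fin n) F :=
  Matrix.of fun i j => if j < i then x i j else 0

instance Matrix.decEqEntry {m n α : Type*} [DecidableEq α] (a : Matrix m n α) (i : m) (j : n) (x : α) :
    Decidable (a i j = x) :=
  decEq _ _

/-- The group of invertible upper-triangular matrices, as a finset. -/
def Bgrp (F : Type*) [Field F] [Fintype F] [DecidableEq F] (n : ℕ) :
    Finset (Matrix (Fin n) (Fin n) F) :=
  univ.filter fun a => (∀ i j : Fin n, j < i → a i j = 0) ∧ a.det ≠ 0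

/-- `v_λ = ∑_{(i,j) ∈ λ} E_{ji}`. -/
def vmat {F : Type*} [Field F] [Fintype F] [DecidableEq F] {n : ℕ}
    (lam : Finset (Fin n × Fin n)) : Matrix (Fin n) (Fin n) F :=
  ∑ p ∈ lam, Matrix.single p.2 p.1 1

/-- `O_λ = {lower(a ⬝ v_λ) : a ∈ B}`. -/
def Oset {n : ℕ} (lam : Finset (Fin n × Fin n)) : Finset (Matrix (Fin n) (Fin n) F) :=
  (Bgrp F n).image fun a => lowerPart (a * vmat lam)

/-- The supercharacter value
`X_λ(g) = ∑_{v ∈ O_λ, lower(g v) = v} θ(tr((g − 1) v))`. -/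
noncomputable def Xchar {n : ℕ} (θ : F → ℂ) (lam : Finset (Fin n × Fin n))
    (g : Matrix (Fin n) (Fin n) F) : ℂ :=
  ∑ v ∈ (Oset lam).filter (fun v => lowerPart (g * v) = v),
    θ (Matrix.trace ((g - 1) * v))

/-- `Ψ_K(g)`: the sum of `θ(tr((g − 1) v))` over all strictly lower-triangular `v`
whose nonzero entries lie in columns indexed by `K` and with `lower(g v) = v`. -/
noncomputable def Psi {n : ℕ} (θ : F → ℂ) (K : Finset (Fin n)) (g : Matrix (Fin n) (Fin n) F) : ℂ :=
  ∑ v ∈ univ.filter (fun v : Matrix (Fin n) (Fin n) F =>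
      (∀ i j, ¬ j < i → v i j = 0) ∧ (∀ i j, v i j ≠ 0 → j ∈ K) ∧ lowerPart (g * v) = v),
    θ (Matrix.trace ((g - 1) * v))

instance {n : ℕ} (lam : Finset (Fin n × Fin n)) : Decidable (IsSP n lam) := by
  unfold IsSP; infer_instance

/-!
The column operations `v ↦ lower(v b)`, with `b` upper unitriangular and supported off the
diagonal in the columns of `K`, act on the matrices counted by `Ψ_K(g)` and preserve both the
condition `lower(g v) = v` and the weight `θ(tr((g - 1) v))`. Column reduction shows that each
orbit contains exactly one normal form: a pivot form for a set partition `λ` with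
`epl λ ⊆ K` whose pivot rows are cleared. The set `O_λ` consists of the pivot forms for `λ`,
and it is the union of the orbits of the normal forms for `λ` under the smaller pattern group
that avoids the positions `(i, j)` where the arc from `i` nests over `j`. Both groups have the
same stabilizer at a normal form, so by orbit–stabilizer each full orbit is `q ^ m` times the
smaller one, where `m` is the number of those nesting positions, namely
`nst_λ^λ + nst_{K∖epl λ}^λ`.
-/

open scoped Matrix

namespace SetPartitionSupercharacter

variable {n : ℕ}

section Action

variable {F : Type*} [Field F]

def lowerMul (v b : Matrix (Fin n) (Fin n) F) : Matrix (Fin n) (Fin n) F := lowerPart (v * b)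

def IsStrictLower (v : Matrix (Fin n) (Fin n) F) : Prop := ∀ i j, ¬ j < i → v i j = 0

def IsUnitriangular (b : Matrix (Fin n) (Fin n) F) : Prop := b.IsUpperTriangular ∧ ∀ i, b i i = 1

lemma lowerPart_apply (x : Matrix (Fin n) (Fin n) F) (i j : Fin n) :
    lowerPart x i j = if j < i then x i j else 0 := rfl

lemma isStrictLower_lowerPart (x : Matrix (Fin n) (Fin n) F) : IsStrictLower (lowerPart x) :=
  fun _ _ h => if_neg h

lemma IsStrictLower.lowerPart_eq {v : Matrix (Fin n) (Fin n) F} (hv : IsStrictLower v) :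
    lowerPart v = v := by
  ext i j
  by_cases h : j < i <;> simp [lowerPart_apply, h, hv i j]

lemma isStrictLower_lowerMul (v b : Matrix (Fin n) (Fin n) F) : IsStrictLower (lowerMul v b) :=
  isStrictLower_lowerPart _

lemma IsStrictLower.lowerMul_one {v : Matrix (Fin n) (Fin n) F} (hv : IsStrictLower v) :
    lowerMul v 1 = v := by
  rw [lowerMul, Matrix.mul_one, hv.lowerPart_eq]

lemma lowerMul_apply (v b : Matrix (Fin n) (Fin n) F) (i j : Fin n) :
    lowerMul v b i j = if j < i then ∑ k, v i k * b k j else 0 := rfl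

lemma lowerMul_lowerMul (v : Matrix (Fin n) (Fin n) F) {b b' : Matrix (Fin n) (Fin n) F}
    (hb' : b'.IsUpperTriangular) : lowerMul (lowerMul v b) b' = lowerMul v (b * b') := by
  ext i j
  rw [lowerMul_apply (lowerMul v b), lowerMul_apply v]
  split_ifs with h
  · rw [← Matrix.mul_apply, ← Matrix.mul_apply, ← Matrix.mul_assoc, Matrix.mul_apply,
      Matrix.mul_apply]
    refine Finset.sum_congr rfl fun k _ => ?_
    by_cases hk : k < i
    · simp only [lowerMul_apply, if_pos hk, Matrix.mul_apply]
    · simp [lowerMul_apply, hk, hb' (lt_of_lt_of_le h (not_lt.mp hk))]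
  · rfl

lemma mul_apply_self_of_isUpperTriangular {b c : Matrix (Fin n) (Fin n) F}
    (hb : b.IsUpperTriangular) (hc : c.IsUpperTriangular) (i : Fin n) :
    (b * c) i i = b i i * c i i := by
  rw [Matrix.mul_apply, Finset.sum_eq_single i]
  · intro k _ hk
    rcases lt_or_gt_of_ne hk with h | h
    · exact mul_eq_zero_of_left (hb h) _
    · exact mul_eq_zero_of_right _ (hc h)
  · exact fun h => absurd (Finset.mem_univ i) h

lemma IsUnitriangular.mul {b c : Matrix (Fin n) (Fin n) F} (hb : IsUnitriangular b)
    (hc : IsUnitriangular c) : IsUnitriangular (b * c) :=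
  ⟨hb.1.mul hc.1, fun i => by rw [mul_apply_self_of_isUpperTriangular hb.1 hc.1, hb.2, hc.2,
    one_mul]⟩

lemma trace_mul_of_isUnitriangular {x b : Matrix (Fin n) (Fin n) F} (hx : x.IsUpperTriangular)
    (hb : IsUnitriangular b) : (x * b).trace = x.trace := by
  simp only [Matrix.trace, Matrix.diag, mul_apply_self_of_isUpperTriangular hx hb.1, hb.2,
    mul_one]

lemma lowerMul_apply_of_lt {w b : Matrix (Fin n) (Fin n) F} (hb : IsUnitriangular b)
    {r j : Fin n} (hjr : j < r) :
    lowerMul w b r j = w r j + ∑ i, (if i < j then b i j else 0) * w r i := by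
  rw [lowerMul_apply, if_pos hjr, ← Finset.add_sum_erase _ _ (Finset.mem_univ j), hb.2,
    mul_one, ← Finset.sum_erase_add _ _ (Finset.mem_univ j)]
  simp only [lt_irrefl, if_false, zero_mul, add_zero]
  refine congrArg _ (Finset.sum_congr rfl fun i hi => ?_)
  rcases lt_or_gt_of_ne (Finset.ne_of_mem_erase hi) with h | h
  · rw [if_pos h, mul_comm]
  · rw [if_neg (not_lt.mpr h.le), hb.1 h, mul_zero, zero_mul]

lemma mem_of_lowerMul_apply_ne_zero {K : Finset (Fin n)} {v b : Matrix (Fin n) (Fin n) F}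
    (hv : ∀ i j, v i j ≠ 0 → j ∈ K) (hb : ∀ i j, i ≠ j → j ∉ K → b i j = 0) {i j : Fin n}
    (h : lowerMul v b i j ≠ 0) : j ∈ K := by
  by_contra hj
  refine h ?_
  rw [lowerMul_apply]
  split_ifs
  · refine Finset.sum_eq_zero fun k _ => ?_
    by_cases hk : k = j
    · subst hk
      exact mul_eq_zero_of_left (not_not.mp fun hne => hj (hv _ _ hne)) _
    · exact mul_eq_zero_of_right _ (hb k j hk hj)
  · rfl

end Action

section Invariance

variable {F : Type*} [Field F] {g v b : Matrix (Fin n) (Fin n) F}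

lemma isUpperTriangular_of_sub_one (hg : ∀ i j : Fin n, ¬ i < j → (g - 1) i j = 0) :
    g.IsUpperTriangular := fun i j (hji : j < i) => by
  simpa [Matrix.sub_apply, Matrix.one_apply_ne hji.ne'] using hg i j (not_lt.mpr hji.le)

lemma mul_apply_of_lowerPart_mul_eq (hfix : lowerPart (g * v) = v) {i k : Fin n} (h : k < i) :
    (g * v) i k = v i k := by
  conv_rhs => rw [← hfix]
  exact (if_pos h).symm

lemma lowerPart_mul_lowerMul (hg : g.IsUpperTriangular) (hfix : lowerPart (g * v) = v)
    (hb : b.IsUpperTriangular) : lowerPart (g * lowerMul v b) = lowerMul v b := by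
  ext i j
  rw [lowerPart_apply, lowerMul_apply]
  split_ifs with h
  · have hgv : (g * lowerMul v b) i j = (g * (v * b)) i j := by
      simp only [Matrix.mul_apply]
      refine Finset.sum_congr rfl fun k _ => ?_
      by_cases hk : j < k
      · rw [lowerMul_apply, if_pos hk]
      · rw [hg (lt_of_le_of_lt (not_lt.mp hk) h), zero_mul, zero_mul]
    rw [hgv, ← Matrix.mul_assoc, Matrix.mul_apply]
    refine Finset.sum_congr rfl fun k _ => ?_
    by_cases hk : k < i
    · rw [mul_apply_of_lowerPart_mul_eq hfix hk]
    · rw [hb (lt_of_lt_of_le h (not_lt.mp hk)), mul_zero, mul_zero]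
  · rfl

lemma trace_sub_one_mul_lowerMul (hg : ∀ i j : Fin n, ¬ i < j → (g - 1) i j = 0)
    (hfix : lowerPart (g * v) = v) (hb : IsUnitriangular b) :
    ((g - 1) * lowerMul v b).trace = ((g - 1) * v).trace := by
  have hlower : ((g - 1) * lowerMul v b).trace = ((g - 1) * (v * b)).trace := by
    simp only [Matrix.trace, Matrix.diag, Matrix.mul_apply]
    refine Finset.sum_congr rfl fun i _ => Finset.sum_congr rfl fun k _ => ?_
    by_cases hk : i < k
    · rw [lowerMul_apply, if_pos hk]
    · rw [hg i k hk, zero_mul, zero_mul]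
  have hupper : ((g - 1) * v).IsUpperTriangular := fun i k (h : k < i) => by
    rw [Matrix.sub_mul, Matrix.one_mul, Matrix.sub_apply, mul_apply_of_lowerPart_mul_eq hfix h,
      sub_self]
  rw [hlower, ← Matrix.mul_assoc, trace_mul_of_isUnitriangular hupper hb]

end Invariance

section Pattern

variable {F : Type*} [Field F] {P P' : Finset (Fin n × Fin n)} {b c : Matrix (Fin n) (Fin n) F}

def IsPattern (P : Finset (Fin n × Fin n)) : Prop :=
  (∀ p ∈ P, p.1 < p.2) ∧ ∀ i j k, (i, j) ∈ P → (j, k) ∈ P → (i, k) ∈ P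

def InPattern (P : Finset (Fin n × Fin n)) (b : Matrix (Fin n) (Fin n) F) : Prop :=
  (∀ i, b i i = 1) ∧ ∀ i j, i ≠ j → (i, j) ∉ P → b i j = 0

lemma InPattern.isUnitriangular (hP : ∀ p ∈ P, p.1 < p.2) (hb : InPattern P b) :
    IsUnitriangular b :=
  ⟨fun i j (h : j < i) => hb.2 i j h.ne' fun hij => (hP _ hij).not_gt h, hb.1⟩

lemma inPattern_one : InPattern P (1 : Matrix (Fin n) (Fin n) F) :=
  ⟨fun _ => Matrix.one_apply_eq _, fun _ _ hij _ => Matrix.one_apply_ne hij⟩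

lemma InPattern.mono (h : P ⊆ P') (hb : InPattern P b) : InPattern P' b :=
  ⟨hb.1, fun i j hij hP' => hb.2 i j hij fun hP => hP' (h hP)⟩

lemma InPattern.mul (hP : IsPattern P) (hb : InPattern P b) (hc : InPattern P c) :
    InPattern P (b * c) := by
  refine ⟨((hb.isUnitriangular hP.1).mul (hc.isUnitriangular hP.1)).2, fun i j hij hij' => ?_⟩
  rw [Matrix.mul_apply]
  refine Finset.sum_eq_zero fun k _ => ?_
  by_cases hki : k = i
  · subst hki
    exact mul_eq_zero_of_right _ (hc.2 _ _ hij hij')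
  by_cases hkj : k = j
  · subst hkj
    exact mul_eq_zero_of_left (hb.2 _ _ hij hij') _
  by_cases hik : (i, k) ∈ P
  · exact mul_eq_zero_of_right _ (hc.2 _ _ hkj fun hkj' => hij' (hP.2 _ _ _ hik hkj'))
  · exact mul_eq_zero_of_left (hb.2 _ _ (Ne.symm hki) hik) _

instance (P : Finset (Fin n × Fin n)) [DecidableEq F] : DecidablePred (InPattern (F := F) P) :=
  fun _ => by unfold InPattern; infer_instance

variable [Fintype F] [DecidableEq F]

def patternGroup (P : Finset (Fin n × Fin n)) : Finset (Matrix (Fin n) (Fin n) F) :=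
  univ.filter (InPattern P)

@[simp]
lemma mem_patternGroup : b ∈ (patternGroup P : Finset (Matrix (Fin n) (Fin n) F)) ↔
    InPattern P b := by
  simp [patternGroup]

/-- Left multiplication by `b` is an injection of the finite set `patternGroup P` into itself,
hence a bijection, so it hits `1`. -/
lemma InPattern.exists_inv (hP : IsPattern P) (hb : InPattern P b) :
    ∃ c, InPattern P c ∧ b * c = 1 ∧ c * b = 1 := by
  have hunit : IsUnit b := by
    rw [Matrix.isUnit_iff_isUnit_det, Matrix.det_of_isUpperTriangular (hb.isUnitriangular hP.1).1]
    simp [hb.1]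
  obtain ⟨c, hc, hbc⟩ := Finset.surjOn_of_injOn_of_card_le (s := patternGroup P)
    (t := patternGroup P) (b * ·)
    (fun c hc => mem_patternGroup.mpr (hb.mul hP (mem_patternGroup.mp hc)))
    (fun _ _ _ _ h => hunit.mul_left_cancel h) le_rfl
    (mem_patternGroup.mpr (inPattern_one (P := P)))
  exact ⟨c, mem_patternGroup.mp hc, hbc, mul_eq_one_comm.mp hbc⟩

lemma card_patternGroup (hP : ∀ p ∈ P, p.1 < p.2) :
    (patternGroup P : Finset (Matrix (Fin n) (Fin n) F)).card = Fintype.card F ^ P.card := by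
  rw [← Fintype.card_coe P, ← Fintype.card_fun, ← Finset.card_univ]
  refine Finset.card_bij' (fun b _ p => b p.1.1 p.1.2)
    (fun f _ => Matrix.of fun i j => if i = j then 1 else if h : (i, j) ∈ P then f ⟨_, h⟩ else 0)
    (fun _ _ => Finset.mem_univ _) (fun f _ => ?_) (fun b hb => ?_) (fun f _ => ?_)
  · exact mem_patternGroup.mpr ⟨fun i => by simp, fun i j hij hP => by simp [hij, hP]⟩
  · obtain ⟨hb1, hb0⟩ := mem_patternGroup.mp hb
    ext i j
    by_cases hij : i = j
    · subst hij; simp [hb1]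
    · by_cases hijP : (i, j) ∈ P <;> simp [hij, hijP, hb0]
  · funext p
    simp [(hP _ p.2).ne]

end Pattern

section SetPartition

variable {lam : Finset (Fin n × Fin n)} {p q : Fin n × Fin n}

lemma _root_.IsSP.lt (h : IsSP n lam) (hp : p ∈ lam) : p.1 < p.2 := h.1 p hp

lemma _root_.IsSP.eq_of_fst_eq (h : IsSP n lam) (hp : p ∈ lam) (hq : q ∈ lam) (e : p.1 = q.1) :
    p = q :=
  Prod.ext e ((h.2 p hp q hq).mp e)

lemma _root_.IsSP.eq_of_snd_eq (h : IsSP n lam) (hp : p ∈ lam) (hq : q ∈ lam) (e : p.2 = q.2) :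
    p = q :=
  Prod.ext ((h.2 p hp q hq).mpr e) e

lemma mem_epl {j : Fin n} : j ∈ epl lam ↔ ∃ l, (j, l) ∈ lam := by
  simp [epl]

end SetPartition

section Forms

variable {F : Type*} [Field F] {lam lam₀ : Finset (Fin n × Fin n)}
  {v w u b : Matrix (Fin n) (Fin n) F}

/-- `O_λ` is exactly the set of pivot forms for `λ` (`mem_Oset_iff`). -/
structure IsPivotForm (lam : Finset (Fin n × Fin n)) (v : Matrix (Fin n) (Fin n) F) : Prop where
  strictLower : IsStrictLower v
  apply_eq_zero_of_notMem : ∀ i j, j ∉ epl lam → v i j = 0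
  pivot_ne_zero : ∀ p ∈ lam, v p.2 p.1 ≠ 0
  apply_eq_zero_of_lt : ∀ p ∈ lam, ∀ i, p.2 < i → v i p.1 = 0

/-- Every orbit of the column operations contains exactly one normal form. -/
structure IsNormalForm (lam : Finset (Fin n × Fin n)) (w : Matrix (Fin n) (Fin n) F) : Prop
    extends IsPivotForm lam w where
  pivot_row_eq_zero : ∀ p ∈ lam, ∀ j, p.1 < j → w p.2 j = 0

lemma IsPivotForm.exists_arc (hv : IsPivotForm lam v) {r i : Fin n} (h : v r i ≠ 0) :
    ∃ l, (i, l) ∈ lam ∧ r ≤ l := by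
  obtain ⟨l, hl⟩ := mem_epl.mp (not_not.mp fun hi => h (hv.apply_eq_zero_of_notMem r i hi))
  exact ⟨l, hl, not_lt.mp fun hlr => h (hv.apply_eq_zero_of_lt _ hl r hlr)⟩

lemma IsPivotForm.mem_of_ne_zero (hv : IsPivotForm lam v) {K : Finset (Fin n)}
    (hepl : epl lam ⊆ K) {i j : Fin n} (h : v i j ≠ 0) : j ∈ K :=
  let ⟨l, hl, _⟩ := hv.exists_arc h
  hepl (mem_epl.mpr ⟨l, hl⟩)

lemma IsPivotForm.sum_mul_eq_zero (hv : IsPivotForm lam v) {β : Fin n → F} {r : Fin n}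
    (h : ∀ p ∈ lam, β p.1 ≠ 0 → p.2 < r) : ∑ i, β i * v r i = 0 := by
  refine Finset.sum_eq_zero fun i _ => ?_
  by_contra hne
  obtain ⟨l, hl, hrl⟩ := hv.exists_arc (right_ne_zero_of_mul hne)
  exact (h _ hl (left_ne_zero_of_mul hne)).not_ge hrl

lemma IsPivotForm.sum_mul_ne_zero (hv : IsPivotForm lam v) (hSP : IsSP n lam)
    {β : Fin n → F} {p : Fin n × Fin n} (hp : p ∈ lam) (hβ : β p.1 ≠ 0)
    (hmax : ∀ q ∈ lam, β q.1 ≠ 0 → q.2 ≤ p.2) : ∑ i, β i * v p.2 i ≠ 0 := by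
  rw [Finset.sum_eq_single p.1]
  · exact mul_ne_zero hβ (hv.pivot_ne_zero p hp)
  · intro i _ hi
    by_contra hne
    obtain ⟨l, hl, hpl⟩ := hv.exists_arc (right_ne_zero_of_mul hne)
    have hlp := hmax _ hl (left_ne_zero_of_mul hne)
    exact hi (congrArg Prod.fst (hSP.eq_of_snd_eq hl hp (le_antisymm hlp hpl)))
  · exact fun h => absurd (Finset.mem_univ _) h

lemma IsPivotForm.lowerMul_apply_eq (hw : IsPivotForm lam w) (hb : IsUnitriangular b)
    {r j : Fin n} (hjr : j < r) (h : ∀ p ∈ lam, p.1 < j → b p.1 j ≠ 0 → p.2 < r) :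
    lowerMul w b r j = w r j := by
  rw [lowerMul_apply_of_lt hb hjr, hw.sum_mul_eq_zero, add_zero]
  intro p hp hβ
  by_cases hpj : p.1 < j
  · exact h p hp hpj (by simpa [hpj] using hβ)
  · simp [hpj] at hβ

lemma IsNormalForm.exists_lowerMul_ne_zero (hw : IsNormalForm lam w) (hSP : IsSP n lam)
    (hb : IsUnitriangular b) {j : Fin n} (h : ∃ p ∈ lam, p.1 < j ∧ b p.1 j ≠ 0 ∧ j < p.2) :
    ∃ p ∈ lam, p.1 < j ∧ b p.1 j ≠ 0 ∧ j < p.2 ∧ lowerMul w b p.2 j ≠ 0 ∧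
      (∀ q ∈ lam, q.1 < j → b q.1 j ≠ 0 → q.2 ≤ p.2) ∧
      ∀ r, p.2 < r → lowerMul w b r j = w r j := by
  classical
  set β : Fin n → F := fun i => if i < j then b i j else 0
  have hβ : ∀ q ∈ lam, β q.1 ≠ 0 ↔ q.1 < j ∧ b q.1 j ≠ 0 := fun q _ => by
    by_cases hq : q.1 < j <;> simp [β, hq]
  obtain ⟨p, hp, hpmax⟩ := Finset.exists_max_image
    (lam.filter fun p => p.1 < j ∧ b p.1 j ≠ 0) Prod.snd
    (by obtain ⟨p, hp, h1, h2, -⟩ := h; exact ⟨p, Finset.mem_filter.mpr ⟨hp, h1, h2⟩⟩)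
  obtain ⟨hp, hpj, hbp⟩ := Finset.mem_filter.mp hp
  have hmax : ∀ q ∈ lam, q.1 < j → b q.1 j ≠ 0 → q.2 ≤ p.2 :=
    fun q hq h1 h2 => hpmax q (Finset.mem_filter.mpr ⟨hq, h1, h2⟩)
  obtain ⟨p', hp', hp'j, hbp', hjp'⟩ := h
  have hjp : j < p.2 := lt_of_lt_of_le hjp' (hmax p' hp' hp'j hbp')
  refine ⟨p, hp, hpj, hbp, hjp, ?_, hmax, fun r hr =>
    hw.lowerMul_apply_eq hb (hjp.trans hr) fun q hq h1 h2 => (hmax q hq h1 h2).trans_lt hr⟩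
  rw [lowerMul_apply_of_lt hb hjp, hw.pivot_row_eq_zero p hp j hpj, zero_add]
  exact hw.sum_mul_ne_zero hSP hp ((hβ p hp).mpr ⟨hpj, hbp⟩)
    fun q hq hq' => hmax q hq ((hβ q hq).mp hq').1 ((hβ q hq).mp hq').2

lemma IsNormalForm.snd_le_of_lowerMul_eq_zero (hw : IsNormalForm lam w) (hSP : IsSP n lam)
    (hb : IsUnitriangular b) {j : Fin n} (h0 : ∀ p ∈ lam, p.1 < j → lowerMul w b p.2 j = 0)
    {p : Fin n × Fin n} (hp : p ∈ lam) (hpj : p.1 < j) (hbp : b p.1 j ≠ 0) : p.2 ≤ j := by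
  by_contra hjp
  obtain ⟨q, hq, hqj, -, -, hne, -⟩ :=
    hw.exists_lowerMul_ne_zero hSP hb ⟨p, hp, hpj, hbp, not_le.mp hjp⟩
  exact hne (h0 q hq hqj)

lemma IsNormalForm.eq_of_lowerMul_eq (hw : IsNormalForm lam w) (hw' : IsNormalForm lam w')
    (hSP : IsSP n lam) (hb : IsUnitriangular b) (h : lowerMul w b = w') : w' = w := by
  ext r j
  by_cases hjr : j < r
  · rw [← h, hw.lowerMul_apply_eq hb hjr fun p hp hpj hbp => lt_of_le_of_lt
      (hw.snd_le_of_lowerMul_eq_zero hSP hb (fun q hq hqj => by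
        rw [h]; exact hw'.pivot_row_eq_zero q hq j hqj) hp hpj hbp) hjr]
  · rw [hw.strictLower r j hjr, hw'.strictLower r j hjr]

lemma mem_of_mem_of_apply_eq (hw : IsPivotForm lam w) (hu : IsPivotForm lam₀ u)
    {j t l : Fin n} (hagree : ∀ r, t < r → u r j = w r j) (htl : t < l) (hl : (j, l) ∈ lam₀) :
    (j, l) ∈ lam := by
  have hwl : w l j ≠ 0 := by rw [← hagree l htl]; exact hu.pivot_ne_zero _ hl
  obtain ⟨l', hl', hll'⟩ := hw.exists_arc hwl
  obtain rfl : l' = l := by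
    by_contra hne
    refine hw.pivot_ne_zero _ hl' ?_
    rw [← hagree l' (htl.trans_le hll')]
    exact hu.apply_eq_zero_of_lt _ hl l' (lt_of_le_of_ne hll' (Ne.symm hne))
  exact hl'

/-- Induction over the columns: column `j` of `w · b` agrees with column `j` of `w` below the
lowest arc that moves it, and that arc starts before `j`, so it already belongs to `lam₀`. -/
lemma IsNormalForm.eq_of_isPivotForm_lowerMul (hw : IsNormalForm lam w) (hSP : IsSP n lam)
    (hSP₀ : IsSP n lam₀) (hb : IsUnitriangular b) (hu : IsPivotForm lam₀ (lowerMul w b)) :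
    lam₀ = lam := by
  suffices hcol : ∀ j l, (j, l) ∈ lam₀ ↔ (j, l) ∈ lam from Finset.ext fun p => hcol p.1 p.2
  intro j
  induction j using WellFoundedLT.induction with
  | _ j ih =>
    by_cases hact : ∃ p ∈ lam, p.1 < j ∧ b p.1 j ≠ 0 ∧ j < p.2
    · obtain ⟨p, hp, hpj, -, -, hne, -, hagree⟩ := hw.exists_lowerMul_ne_zero hSP hb hact
      have hp₀ : p ∈ lam₀ := (ih p.1 hpj p.2).mpr hp
      obtain ⟨l₀, hl₀, hpl₀⟩ := hu.exists_arc hne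
      have hlt : p.2 < l₀ := lt_of_le_of_ne hpl₀ fun e =>
        hpj.ne (congrArg Prod.fst (hSP₀.eq_of_snd_eq hp₀ hl₀ e))
      have hl : (j, l₀) ∈ lam := mem_of_mem_of_apply_eq hw.toIsPivotForm hu hagree hlt hl₀
      intro l
      constructor
      · intro h
        rwa [hSP₀.eq_of_fst_eq h hl₀ rfl]
      · intro h
        rwa [hSP.eq_of_fst_eq h hl rfl]
    · push Not at hact
      have hagree : ∀ r, j < r → lowerMul w b r j = w r j := fun r hjr =>
        hw.lowerMul_apply_eq hb hjr fun p hp hpj hbp => (hact p hp hpj hbp).trans_lt hjr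
      exact fun l => ⟨fun h => mem_of_mem_of_apply_eq hw.toIsPivotForm hu hagree (hSP₀.lt h) h,
        fun h => mem_of_mem_of_apply_eq hu hw.toIsPivotForm (fun r hr => (hagree r hr).symm)
          (hSP.lt h) h⟩

lemma IsNormalForm.eq_of_lowerMul_eq_of_isNormalForm (hw : IsNormalForm lam w)
    (hw₀ : IsNormalForm lam₀ u) (hSP : IsSP n lam) (hSP₀ : IsSP n lam₀)
    (hb : IsUnitriangular b) (h : lowerMul w b = u) : lam₀ = lam ∧ u = w := by
  obtain rfl := hw.eq_of_isPivotForm_lowerMul hSP hSP₀ hb (h ▸ hw₀.toIsPivotForm)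
  exact ⟨rfl, hw.eq_of_lowerMul_eq hw₀ hSP hb h⟩

end Forms

section Positions

variable {K : Finset (Fin n)} {lam : Finset (Fin n × Fin n)} {p : Fin n × Fin n}

def colPattern (K : Finset (Fin n)) : Finset (Fin n × Fin n) :=
  univ.filter fun p => p.1 < p.2 ∧ p.2 ∈ K

def activePositions (K : Finset (Fin n)) (lam : Finset (Fin n × Fin n)) :
    Finset (Fin n × Fin n) :=
  (colPattern K).filter fun p => ∃ l, (p.1, l) ∈ lam ∧ p.2 < l

def nestingPositions (K : Finset (Fin n)) (lam : Finset (Fin n × Fin n)) :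
    Finset (Fin n × Fin n) :=
  (colPattern K).filter fun p => ∃ l, (p.1, l) ∈ lam ∧ p.2 < l ∧ ∀ l', (p.2, l') ∈ lam → l' < l

lemma mem_colPattern : p ∈ colPattern K ↔ p.1 < p.2 ∧ p.2 ∈ K := by
  simp [colPattern]

lemma mem_activePositions :
    p ∈ activePositions K lam ↔ p.1 < p.2 ∧ p.2 ∈ K ∧ ∃ l, (p.1, l) ∈ lam ∧ p.2 < l := by
  simp [activePositions, mem_colPattern, and_assoc]

lemma mem_nestingPositions : p ∈ nestingPositions K lam ↔ p.1 < p.2 ∧ p.2 ∈ K ∧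
    ∃ l, (p.1, l) ∈ lam ∧ p.2 < l ∧ ∀ l', (p.2, l') ∈ lam → l' < l := by
  simp [nestingPositions, mem_colPattern, and_assoc]

lemma nestingPositions_subset_activePositions : nestingPositions K lam ⊆ activePositions K lam :=
  fun _ hp => Finset.mem_filter.mpr ⟨(Finset.mem_filter.mp hp).1,
    let ⟨l, hl, hpl, _⟩ := (Finset.mem_filter.mp hp).2; ⟨l, hl, hpl⟩⟩

lemma isPattern_colPattern : IsPattern (colPattern K) :=
  ⟨fun _ hp => (mem_colPattern.mp hp).1, fun _ _ _ hij hjk =>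
    mem_colPattern.mpr ⟨(mem_colPattern.mp hij).1.trans (mem_colPattern.mp hjk).1,
      (mem_colPattern.mp hjk).2⟩⟩

/-- If the arc from `i` nests over `k`, then for any `i < j < k` it nests over `j` or the arc
from `j` nests over `k`. -/
lemma isPattern_colPattern_sdiff_nestingPositions :
    IsPattern (colPattern K \ nestingPositions K lam) := by
  refine ⟨fun p hp => (mem_colPattern.mp (Finset.mem_sdiff.mp hp).1).1, fun i j k hij hjk => ?_⟩
  simp only [Finset.mem_sdiff, mem_nestingPositions, mem_colPattern, not_and, not_exists,
    not_forall, not_lt] at hij hjk ⊢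
  refine ⟨⟨hij.1.1.trans hjk.1.1, hjk.1.2⟩, fun _ _ l hil hkl => ?_⟩
  obtain ⟨l', hjl', hll'⟩ := hij.2 hij.1.1 hij.1.2 l hil (hjk.1.1.trans hkl)
  obtain ⟨l'', hkl'', hl'l''⟩ := hjk.2 hjk.1.1 hjk.1.2 l' hjl' (hkl.trans_le hll')
  exact ⟨l'', hkl'', hll'.trans hl'l''⟩

lemma card_filter_nestingPositions_mem_epl (hSP : IsSP n lam) (hepl : epl lam ⊆ K) :
    ((nestingPositions K lam).filter fun p => p.2 ∈ epl lam).card = nstself lam := by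
  symm
  refine Finset.card_bij (fun x _ => (x.1.1, x.2.1)) ?_ ?_ ?_
  · rintro ⟨⟨i, l⟩, ⟨j, k⟩⟩ hx
    simp only [Finset.mem_filter, Finset.mem_product] at hx
    obtain ⟨⟨hil, hjk⟩, hij, hjk', hkl⟩ := hx
    refine Finset.mem_filter.mpr ⟨mem_nestingPositions.mpr ⟨hij,
      hepl (mem_epl.mpr ⟨k, hjk⟩), l, hil, hjk'.trans hkl, fun l' hl' => ?_⟩,
      mem_epl.mpr ⟨k, hjk⟩⟩
    obtain rfl : l' = k := congrArg Prod.snd (hSP.eq_of_fst_eq hl' hjk rfl)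
    exact hkl
  · rintro ⟨⟨i, l⟩, ⟨j, k⟩⟩ hx ⟨⟨i', l'⟩, ⟨j', k'⟩⟩ hx' he
    simp only [Finset.mem_filter, Finset.mem_product, Prod.mk.injEq] at hx hx' he
    obtain ⟨rfl, rfl⟩ := he
    rw [hSP.eq_of_fst_eq hx.1.1 hx'.1.1 rfl, hSP.eq_of_fst_eq hx.1.2 hx'.1.2 rfl]
  · rintro ⟨i, j⟩ hp
    obtain ⟨hp, hj⟩ := Finset.mem_filter.mp hp
    obtain ⟨hij, -, l, hil, hjl, hnest⟩ := mem_nestingPositions.mp hp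
    obtain ⟨k, hjk⟩ := mem_epl.mp hj
    exact ⟨((i, l), (j, k)), Finset.mem_filter.mpr ⟨Finset.mem_product.mpr ⟨hil, hjk⟩, hij,
      hSP.lt hjk, hnest k hjk⟩, rfl⟩

lemma card_filter_nestingPositions_notMem_epl (hSP : IsSP n lam) :
    ((nestingPositions K lam).filter fun p => p.2 ∉ epl lam).card = nst lam (K \ epl lam) := by
  symm
  refine Finset.card_bij (fun x _ => (x.1.1, x.2)) ?_ ?_ ?_
  · rintro ⟨⟨i, l⟩, j⟩ hx
    simp only [Finset.mem_filter, Finset.mem_product, Finset.mem_sdiff] at hx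
    obtain ⟨⟨hil, hjK, hj⟩, hij, hjl⟩ := hx
    exact Finset.mem_filter.mpr ⟨mem_nestingPositions.mpr ⟨hij, hjK, l, hil, hjl,
      fun l' hl' => absurd (mem_epl.mpr ⟨l', hl'⟩) hj⟩, hj⟩
  · rintro ⟨⟨i, l⟩, j⟩ hx ⟨⟨i', l'⟩, j'⟩ hx' he
    simp only [Finset.mem_filter, Finset.mem_product, Prod.mk.injEq] at hx hx' he
    obtain ⟨rfl, rfl⟩ := he
    rw [hSP.eq_of_fst_eq hx.1.1 hx'.1.1 rfl]
  · rintro ⟨i, j⟩ hp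
    obtain ⟨hp, hj⟩ := Finset.mem_filter.mp hp
    obtain ⟨hij, hjK, l, hil, hjl, -⟩ := mem_nestingPositions.mp hp
    exact ⟨((i, l), j), Finset.mem_filter.mpr ⟨Finset.mem_product.mpr ⟨hil,
      Finset.mem_sdiff.mpr ⟨hjK, hj⟩⟩, hij, hjl⟩, rfl⟩

lemma card_nestingPositions (hSP : IsSP n lam) (hepl : epl lam ⊆ K) :
    (nestingPositions K lam).card = nstself lam + nst lam (K \ epl lam) := by
  rw [← Finset.card_filter_add_card_filter_not (p := fun p : Fin n × Fin n => p.2 ∈ epl lam),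
    card_filter_nestingPositions_mem_epl hSP hepl, card_filter_nestingPositions_notMem_epl hSP]

end Positions

section PatternAction

variable {F : Type*} [Field F] {K : Finset (Fin n)} {lam : Finset (Fin n × Fin n)}
  {w b : Matrix (Fin n) (Fin n) F}

lemma InPattern.apply_eq_zero_of_notMem (hb : InPattern (colPattern K) b) {i j : Fin n}
    (hij : i ≠ j) (hj : j ∉ K) : b i j = 0 :=
  hb.2 i j hij fun h => hj (mem_colPattern.mp h).2

lemma IsNormalForm.lowerMul_eq_self_iff (hw : IsNormalForm lam w) (hSP : IsSP n lam)
    (hb : InPattern (colPattern K) b) :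
    lowerMul w b = w ↔ InPattern (colPattern K \ activePositions K lam) b := by
  have hbu := hb.isUnitriangular isPattern_colPattern.1
  constructor
  · refine fun h => ⟨hb.1, fun i j hij hmem => ?_⟩
    by_cases hP : (i, j) ∈ colPattern K
    · have hact : (i, j) ∈ activePositions K lam :=
        not_not.mp fun hact => hmem (Finset.mem_sdiff.mpr ⟨hP, hact⟩)
      obtain ⟨hij', -, l, hil, hjl⟩ := mem_activePositions.mp hact
      by_contra hbij
      refine hjl.not_ge (hw.snd_le_of_lowerMul_eq_zero hSP hbu (fun q hq hqj => ?_) hil hij' hbij)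
      rw [h]
      exact hw.pivot_row_eq_zero q hq j hqj
    · exact hb.2 i j hij hP
  · intro h
    ext r j
    by_cases hjr : j < r
    · refine hw.lowerMul_apply_eq hbu hjr fun p hp hpj hbp => not_le.mp fun hrp => hbp ?_
      refine h.2 _ _ hpj.ne fun hmem => (Finset.mem_sdiff.mp hmem).2 ?_
      exact mem_activePositions.mpr ⟨hpj, (mem_colPattern.mp (Finset.mem_sdiff.mp hmem).1).2,
        p.2, hp, hjr.trans_le hrp⟩
    · rw [lowerMul_apply, if_neg hjr, hw.strictLower r j hjr]

lemma IsNormalForm.isPivotForm_lowerMul (hw : IsNormalForm lam w) (hSP : IsSP n lam)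
    (hb : InPattern (colPattern K \ nestingPositions K lam) b) :
    IsPivotForm lam (lowerMul w b) := by
  have hbu := hb.isUnitriangular isPattern_colPattern_sdiff_nestingPositions.1
  have hcol : ∀ r j, j < r → (∀ l, (j, l) ∈ lam → l ≤ r) → lowerMul w b r j = w r j := by
    refine fun r j hjr hj => hw.lowerMul_apply_eq hbu hjr fun p hp hpj hbp => ?_
    by_contra hrp
    have hmem : (p.1, j) ∈ colPattern K \ nestingPositions K lam :=
      not_not.mp fun hmem => hbp (hb.2 _ _ hpj.ne hmem)
    simp only [Finset.mem_sdiff, mem_nestingPositions, mem_colPattern, not_and, not_exists,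
      not_forall, not_lt] at hmem
    obtain ⟨l, hjl, hpl⟩ := hmem.2 hmem.1.1 hmem.1.2 p.2 hp (hjr.trans_le (not_lt.mp hrp))
    refine hrp (lt_of_le_of_ne (hpl.trans (hj l hjl)) fun e => ?_)
    refine hpj.ne (congrArg Prod.fst (hSP.eq_of_snd_eq hp hjl (le_antisymm hpl ?_)))
    exact e ▸ hj l hjl
  refine ⟨isStrictLower_lowerMul w b, fun r j hj => ?_, fun p hp => ?_, fun p hp r hr => ?_⟩
  · by_cases hjr : j < r
    · rw [hcol r j hjr fun l hl => absurd (mem_epl.mpr ⟨l, hl⟩) hj,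
        hw.apply_eq_zero_of_notMem r j hj]
    · rw [lowerMul_apply, if_neg hjr]
  · rw [hcol _ _ (hSP.lt hp) fun l hl => (congrArg Prod.snd (hSP.eq_of_fst_eq hl hp rfl)).le]
    exact hw.pivot_ne_zero p hp
  · rw [hcol _ _ ((hSP.lt hp).trans hr) fun l hl =>
      (congrArg Prod.snd (hSP.eq_of_fst_eq hl hp rfl)).le.trans hr.le]
    exact hw.apply_eq_zero_of_lt p hp r hr

lemma IsNormalForm.inPattern_of_isPivotForm_lowerMul (hw : IsNormalForm lam w)
    (hSP : IsSP n lam) (hb : InPattern (colPattern K) b) (hu : IsPivotForm lam (lowerMul w b)) :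
    InPattern (colPattern K \ nestingPositions K lam) b := by
  refine ⟨hb.1, fun i j hij hmem => ?_⟩
  by_cases hP : (i, j) ∈ colPattern K
  · have hnest : (i, j) ∈ nestingPositions K lam :=
      not_not.mp fun hnest => hmem (Finset.mem_sdiff.mpr ⟨hP, hnest⟩)
    obtain ⟨hij', -, l, hil, hjl, hnest⟩ := mem_nestingPositions.mp hnest
    by_contra hbij
    obtain ⟨p, -, -, -, -, hne, hmax, -⟩ := hw.exists_lowerMul_ne_zero hSP
      (hb.isUnitriangular isPattern_colPattern.1) ⟨(i, l), hil, hij', hbij, hjl⟩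
    obtain ⟨l', hjl', hpl'⟩ := hu.exists_arc hne
    exact (hnest l' hjl').not_ge ((hmax _ hil hij' hbij).trans hpl')
  · exact hb.2 i j hij hP

end PatternAction

section Existence

variable {F : Type*} [Field F] {K : Finset (Fin n)} {lam : Finset (Fin n × Fin n)} {m : ℕ}
  {w u : Matrix (Fin n) (Fin n) F}

lemma _root_.IsSP.insert (hSP : IsSP n lam) {j l : Fin n} (hjl : j < l) (hj : j ∉ epl lam)
    (hl : ∀ p ∈ lam, p.2 ≠ l) : IsSP n (insert (j, l) lam) := by
  refine ⟨fun p hp => ?_, fun p hp q hq => ?_⟩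
  · rcases Finset.mem_insert.mp hp with rfl | hp
    exacts [hjl, hSP.lt hp]
  · have hfst : ∀ p ∈ lam, p.1 ≠ j := fun p hp e => hj (mem_epl.mpr ⟨p.2, e ▸ hp⟩)
    rcases Finset.mem_insert.mp hp with rfl | hp <;> rcases Finset.mem_insert.mp hq with rfl | hq
    · simp
    · exact iff_of_false (hfst q hq).symm (hl q hq).symm
    · exact iff_of_false (hfst p hp) (hl p hp)
    · exact hSP.2 p hp q hq

/-- Back substitution along the arcs, from the lowest pivot upwards. -/
lemma exists_add_sum_mul_eq_zero (hSP : IsSP n lam) (hpiv : ∀ p ∈ lam, w p.2 p.1 ≠ 0)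
    (hbelow : ∀ p ∈ lam, ∀ i, p.2 < i → w i p.1 = 0) (c : Fin n → F) :
    ∃ t : Fin n → F, (∀ i, t i ≠ 0 → i ∈ epl lam) ∧
      ∀ p ∈ lam, c p.2 + ∑ i, t i * w p.2 i = 0 := by
  classical
  suffices h : ∀ s ⊆ lam, ∀ c : Fin n → F, ∃ t : Fin n → F, (∀ i, t i ≠ 0 → i ∈ epl s) ∧
      ∀ p ∈ s, c p.2 + ∑ i, t i * w p.2 i = 0 from
    (h lam subset_rfl c)
  intro s
  refine Finset.induction_on_max_value Prod.snd s (fun _ c => ⟨0, by simp, by simp⟩) ?_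
  intro a s has hmax ih hs c
  have ha := hs (Finset.mem_insert_self a s)
  set t₀ := -c a.2 / w a.2 a.1
  obtain ⟨t, ht, hts⟩ := ih ((Finset.subset_insert a s).trans hs)
    fun r => c r + t₀ * w r a.1
  have hsum : ∀ r, ∑ i, (t + Pi.single a.1 t₀ : Fin n → F) i * w r i =
      ∑ i, t i * w r i + t₀ * w r a.1 := by
    intro r
    simp [add_mul, Finset.sum_add_distrib, Pi.single_apply]
  refine ⟨t + Pi.single a.1 t₀, fun i hi => ?_, fun p hp => ?_⟩
  · by_cases hia : i = a.1
    · exact mem_epl.mpr ⟨a.2, Finset.mem_insert.mpr (Or.inl (by rw [hia]))⟩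
    · have hti : t i ≠ 0 := by simpa [Pi.single_apply, hia] using hi
      obtain ⟨l, hl⟩ := mem_epl.mp (ht i hti)
      exact mem_epl.mpr ⟨l, Finset.mem_insert_of_mem hl⟩
  rw [hsum]
  rcases Finset.mem_insert.mp hp with rfl | hp
  · have hzero : ∑ i, t i * w p.2 i = 0 := by
      refine Finset.sum_eq_zero fun i _ => ?_
      by_cases hti : t i = 0
      · rw [hti, zero_mul]
      obtain ⟨l, hl⟩ := mem_epl.mp (ht i hti)
      have hlp : l < p.2 := lt_of_le_of_ne (hmax _ hl) fun e =>
        has (hSP.eq_of_snd_eq (hs (Finset.mem_insert_of_mem hl)) ha e ▸ hl)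
      rw [hbelow _ (hs (Finset.mem_insert_of_mem hl)) _ hlp, mul_zero]
    rw [hzero, zero_add, div_mul_cancel₀ _ (hpiv _ ha), add_neg_cancel]
  · linear_combination hts p hp

def leftCols (m : ℕ) (w : Matrix (Fin n) (Fin n) F) : Matrix (Fin n) (Fin n) F :=
  Matrix.of fun i j => if (j : ℕ) < m then w i j else 0

lemma leftCols_apply (m : ℕ) (w : Matrix (Fin n) (Fin n) F) (i j : Fin n) :
    leftCols m w i j = if (j : ℕ) < m then w i j else 0 := rfl

lemma leftCols_of_le (hm : n ≤ m) (w : Matrix (Fin n) (Fin n) F) : leftCols m w = w := by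
  ext i j
  exact if_pos (j.2.trans_le hm)

lemma IsNormalForm.fst_lt (hw : IsNormalForm lam (leftCols m w)) {p : Fin n × Fin n}
    (hp : p ∈ lam) : (p.1 : ℕ) < m := by
  by_contra h
  exact hw.pivot_ne_zero p hp (if_neg h)

lemma IsNormalForm.exists_clear_column (hw : IsNormalForm lam (leftCols m w)) (hSP : IsSP n lam)
    (hws : IsStrictLower w) (hwK : ∀ i j, w i j ≠ 0 → j ∈ K) (j₀ : Fin n) (hj₀ : (j₀ : ℕ) = m) :
    ∃ s, InPattern (colPattern K) s ∧ (∀ r j, j ≠ j₀ → lowerMul w s r j = w r j) ∧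
      ∀ p ∈ lam, j₀ < p.2 → lowerMul w s p.2 j₀ = 0 := by
  by_cases hK : j₀ ∉ K
  · refine ⟨1, inPattern_one, fun r j _ => by rw [hws.lowerMul_one], fun p _ _ => ?_⟩
    rw [hws.lowerMul_one]
    exact not_not.mp fun h => hK (hwK _ _ h)
  rw [not_not] at hK
  have hfst : ∀ p ∈ lam, p.1 < j₀ := fun p hp => by
    have := hw.fst_lt hp
    rw [← hj₀] at this
    exact this
  have hleft : ∀ p ∈ lam, ∀ r, leftCols m w r p.1 = w r p.1 := fun p hp r => by
    rw [leftCols_apply, if_pos (hw.fst_lt hp)]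
  obtain ⟨t, ht, htw⟩ := exists_add_sum_mul_eq_zero hSP
    (fun p hp => hleft p hp p.2 ▸ hw.pivot_ne_zero p hp)
    (fun p hp i hi => hleft p hp i ▸ hw.apply_eq_zero_of_lt p hp i hi) (fun r => w r j₀)
  have htlt : ∀ i, t i ≠ 0 → i < j₀ := fun i hi => by
    obtain ⟨l, hl⟩ := mem_epl.mp (ht i hi)
    exact hfst _ hl
  set s : Matrix (Fin n) (Fin n) F := 1 + Matrix.of fun i j => if j = j₀ then t i else 0
  have hs : ∀ r j, j < r → lowerMul w s r j = w r j + if j = j₀ then ∑ i, t i * w r i else 0 := by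
    intro r j hjr
    simp only [lowerMul_apply, if_pos hjr, s, Matrix.add_apply, Matrix.of_apply, mul_add,
      Finset.sum_add_distrib, Matrix.one_apply, mul_ite, mul_one, mul_zero]
    split_ifs <;> simp [mul_comm]
  refine ⟨s, ⟨fun i => ?_, fun i j hij hP => ?_⟩, fun r j hj => ?_, fun p hp hp₀ => ?_⟩
  · have : t j₀ = 0 := not_not.mp fun h => (htlt _ h).false
    by_cases hi : i = j₀ <;> simp [s, hi, this]
  · simp only [s, Matrix.add_apply, Matrix.one_apply_ne hij, Matrix.of_apply, zero_add]
    split_ifs with hj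
    · exact not_not.mp fun h => hP (mem_colPattern.mpr ⟨hj ▸ htlt i h, hj ▸ hK⟩)
    · rfl
  · by_cases hjr : j < r
    · rw [hs r j hjr, if_neg hj, add_zero]
    · rw [lowerMul_apply, if_neg hjr, hws r j hjr]
  · rw [hs _ _ hp₀, if_pos rfl]
    exact htw p hp

lemma leftCols_succ_apply_of_ne {j₀ : Fin n} (hj₀ : (j₀ : ℕ) = m) (w : Matrix (Fin n) (Fin n) F)
    (r : Fin n) {j : Fin n} (hj : j ≠ j₀) : leftCols (m + 1) w r j = leftCols m w r j := by
  have : (j : ℕ) ≠ m := fun h => hj (Fin.ext (h.trans hj₀.symm))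
  simp only [leftCols_apply]
  split_ifs <;> first | rfl | (exfalso; omega)

lemma leftCols_succ_apply_self {j₀ : Fin n} (hj₀ : (j₀ : ℕ) = m) (w : Matrix (Fin n) (Fin n) F)
    (r : Fin n) : leftCols (m + 1) w r j₀ = w r j₀ :=
  if_pos (by omega)

lemma IsNormalForm.fst_ne (hw : IsNormalForm lam (leftCols m w)) {j₀ : Fin n}
    (hj₀ : (j₀ : ℕ) = m) {p : Fin n × Fin n} (hp : p ∈ lam) : p.1 ≠ j₀ :=
  fun e => (hw.fst_lt hp).ne (by rw [e, hj₀])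

lemma IsNormalForm.leftCols_succ_of_forall_eq_zero (hw : IsNormalForm lam (leftCols m w))
    {j₀ : Fin n} (hj₀ : (j₀ : ℕ) = m) (hz : ∀ r, w r j₀ = 0) :
    IsNormalForm lam (leftCols (m + 1) w) := by
  convert hw using 1
  ext r j
  by_cases hj : j = j₀
  · rw [hj, leftCols_succ_apply_self hj₀, hz, leftCols_apply, if_neg hj₀.not_lt]
  · exact leftCols_succ_apply_of_ne hj₀ w r hj

/-- Once column `m` is cleared at the existing pivot rows, its lowest nonzero entry becomes the
pivot of a new arc. -/
lemma IsNormalForm.leftCols_succ_insert (hw : IsNormalForm lam (leftCols m w))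
    (hws : IsStrictLower w) {j₀ l₀ : Fin n} (hj₀ : (j₀ : ℕ) = m)
    (hclear : ∀ p ∈ lam, j₀ < p.2 → w p.2 j₀ = 0) (hl₀ : w l₀ j₀ ≠ 0)
    (hmax : ∀ r, w r j₀ ≠ 0 → r ≤ l₀) :
    IsNormalForm (insert (j₀, l₀) lam) (leftCols (m + 1) w) := by
  have hother := fun r {j} (hj : j ≠ j₀) => leftCols_succ_apply_of_ne hj₀ w r hj
  have hnew := leftCols_succ_apply_self hj₀ w
  refine ⟨⟨fun r j hrj => ?_, fun r j hj => ?_, fun p hp => ?_, fun p hp r hr => ?_⟩,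
    fun p hp j hj => ?_⟩
  · rw [leftCols_apply, hws r j hrj, ite_self]
  · have hj' : j ≠ j₀ := fun e => hj (mem_epl.mpr ⟨l₀, e ▸ Finset.mem_insert_self _ _⟩)
    rw [hother r hj']
    refine hw.apply_eq_zero_of_notMem r j fun h => hj ?_
    obtain ⟨l, hl⟩ := mem_epl.mp h
    exact mem_epl.mpr ⟨l, Finset.mem_insert_of_mem hl⟩
  · rcases Finset.mem_insert.mp hp with rfl | hp
    · rw [hnew]; exact hl₀
    · rw [hother _ (hw.fst_ne hj₀ hp)]; exact hw.pivot_ne_zero p hp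
  · rcases Finset.mem_insert.mp hp with rfl | hp
    · rw [hnew]; exact not_not.mp fun h => (hmax r h).not_gt hr
    · rw [hother _ (hw.fst_ne hj₀ hp)]; exact hw.apply_eq_zero_of_lt p hp r hr
  · rcases Finset.mem_insert.mp hp with rfl | hp
    · rw [leftCols_apply, if_neg (by rw [← hj₀]; exact Nat.not_lt.mpr (Nat.succ_le_of_lt hj))]
    · by_cases hjj : j = j₀
      · rw [hjj, hnew]
        by_cases hjp : j₀ < p.2
        · exact hclear p hp hjp
        · exact hws _ _ hjp
      · rw [hother _ hjj]; exact hw.pivot_row_eq_zero p hp j hj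

lemma IsNormalForm.exists_leftCols_succ (hw : IsNormalForm lam (leftCols m w)) (hSP : IsSP n lam)
    (hws : IsStrictLower w) {j₀ : Fin n} (hj₀ : (j₀ : ℕ) = m)
    (hclear : ∀ p ∈ lam, j₀ < p.2 → w p.2 j₀ = 0) :
    ∃ lam', IsSP n lam' ∧ IsNormalForm lam' (leftCols (m + 1) w) := by
  by_cases hz : ∀ r, w r j₀ = 0
  · exact ⟨lam, hSP, hw.leftCols_succ_of_forall_eq_zero hj₀ hz⟩
  push Not at hz
  classical
  obtain ⟨l₀, hl₀, hmax⟩ := Finset.exists_max_image (univ.filter fun r => w r j₀ ≠ 0) id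
    (by obtain ⟨r, hr⟩ := hz; exact ⟨r, Finset.mem_filter.mpr ⟨Finset.mem_univ _, hr⟩⟩)
  have hl₀ : w l₀ j₀ ≠ 0 := (Finset.mem_filter.mp hl₀).2
  have hmax : ∀ r, w r j₀ ≠ 0 → r ≤ l₀ := fun r hr =>
    hmax r (Finset.mem_filter.mpr ⟨Finset.mem_univ _, hr⟩)
  have hj₀l₀ : j₀ < l₀ := not_le.mp fun h => hl₀ (hws _ _ (not_lt.mpr h))
  refine ⟨insert (j₀, l₀) lam, hSP.insert hj₀l₀ (fun h => ?_)
    (fun p hp e => hl₀ (e ▸ hclear p hp (e ▸ hj₀l₀))),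
    hw.leftCols_succ_insert hws hj₀ hclear hl₀ hmax⟩
  obtain ⟨l, hl⟩ := mem_epl.mp h
  exact hw.fst_ne hj₀ hl rfl

lemma exists_isNormalForm_lowerMul (huK : ∀ i j, u i j ≠ 0 → j ∈ K) :
    ∃ lam b, IsSP n lam ∧ InPattern (colPattern K) b ∧ IsNormalForm lam (lowerMul u b) := by
  suffices h : ∀ m ≤ n, ∃ lam b, IsSP n lam ∧ InPattern (colPattern K) b ∧
      IsNormalForm lam (leftCols m (lowerMul u b)) by
    simpa only [leftCols_of_le le_rfl] using h n le_rfl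
  intro m
  induction m with
  | zero =>
    refine fun _ => ⟨∅, 1, ⟨by simp, by simp⟩, inPattern_one, ⟨⟨fun _ _ _ => rfl,
      fun _ _ _ => rfl, by simp, by simp⟩, by simp⟩⟩
  | succ m ih =>
    intro hm
    obtain ⟨lam, b, hSP, hb, hw⟩ := ih (Nat.le_of_succ_le hm)
    set j₀ : Fin n := ⟨m, hm⟩
    obtain ⟨s, hs, hcol, hclear⟩ := hw.exists_clear_column hSP (isStrictLower_lowerMul u b)
      (fun i j h => mem_of_lowerMul_apply_ne_zero huK
        (fun i j hij hP => hb.2 i j hij fun h => hP (mem_colPattern.mp h).2) h) j₀ rfl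
    have hbs : lowerMul (lowerMul u b) s = lowerMul u (b * s) :=
      lowerMul_lowerMul u (hs.isUnitriangular isPattern_colPattern.1).1
    have hleft : leftCols m (lowerMul u (b * s)) = leftCols m (lowerMul u b) := by
      ext r j
      simp only [leftCols_apply]
      split_ifs with hj
      · rw [← hbs, hcol r j (Fin.ne_of_lt hj)]
      · rfl
    obtain ⟨lam', hSP', hw'⟩ :=
      (hleft ▸ hw).exists_leftCols_succ hSP (isStrictLower_lowerMul u _) rfl
      (fun p hp hp₀ => hbs ▸ hclear p hp hp₀)
    exact ⟨lam', b * s, hSP', hb.mul isPattern_colPattern hs, hw'⟩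

end Existence

section Oset

variable {F : Type*} [Field F] [Fintype F] [DecidableEq F] {lam : Finset (Fin n × Fin n)}
  {v x : Matrix (Fin n) (Fin n) F} {j l : Fin n}

lemma vmat_apply (r c : Fin n) :
    (vmat lam : Matrix (Fin n) (Fin n) F) r c = if (c, r) ∈ lam then 1 else 0 := by
  rw [vmat, Matrix.sum_apply, ← Finset.sum_ite_eq' lam (c, r) fun _ => (1 : F)]
  refine Finset.sum_congr rfl fun p _ => ?_
  simp only [Matrix.single_apply, Prod.ext_iff]
  exact if_congr ⟨fun h => ⟨h.2, h.1⟩, fun h => ⟨h.2, h.1⟩⟩ rfl rfl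

lemma mul_vmat_apply_of_mem (hSP : IsSP n lam) (hjl : (j, l) ∈ lam) (i : Fin n) :
    (x * vmat lam : Matrix (Fin n) (Fin n) F) i j = x i l := by
  rw [Matrix.mul_apply, Finset.sum_eq_single l]
  · rw [vmat_apply, if_pos hjl, mul_one]
  · refine fun k _ hk => by
      rw [vmat_apply, if_neg fun h => hk (by simpa using hSP.eq_of_fst_eq h hjl rfl),
        mul_zero]
  · exact fun h => absurd (Finset.mem_univ l) h

lemma mul_vmat_apply_of_notMem (hj : j ∉ epl lam) (i : Fin n) :
    (x * vmat lam : Matrix (Fin n) (Fin n) F) i j = 0 := by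
  rw [Matrix.mul_apply]
  exact Finset.sum_eq_zero fun k _ => by
    rw [vmat_apply, if_neg fun h => hj (mem_epl.mpr ⟨k, h⟩), mul_zero]

lemma mul_vmat_transpose_apply_of_mem (hSP : IsSP n lam) (hjl : (j, l) ∈ lam) (i : Fin n) :
    (x * (vmat lam)ᵀ : Matrix (Fin n) (Fin n) F) i l = x i j := by
  rw [Matrix.mul_apply, Finset.sum_eq_single j]
  · rw [Matrix.transpose_apply, vmat_apply, if_pos hjl, mul_one]
  · refine fun k _ hk => by
      rw [Matrix.transpose_apply, vmat_apply,
        if_neg fun h => hk (by simpa using hSP.eq_of_snd_eq h hjl rfl), mul_zero]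
  · exact fun h => absurd (Finset.mem_univ j) h

lemma mul_vmat_transpose_apply_of_forall_ne {k : Fin n} (hk : ∀ p ∈ lam, p.2 ≠ k) (i : Fin n) :
    (x * (vmat lam)ᵀ : Matrix (Fin n) (Fin n) F) i k = 0 := by
  rw [Matrix.mul_apply]
  exact Finset.sum_eq_zero fun c _ => by
    rw [Matrix.transpose_apply, vmat_apply, if_neg fun h => hk _ h rfl, mul_zero]

/-- For `v` in pivot form, `a = v v_λᵀ + (identity on the rows that are not right endpoints)`
is invertible upper triangular with `lower(a v_λ) = v`. -/
lemma mem_Oset_iff (hSP : IsSP n lam) : v ∈ Oset lam ↔ IsPivotForm lam v := by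
  constructor
  · simp only [Oset, Bgrp, Finset.mem_image, Finset.mem_filter, Finset.mem_univ, true_and]
    rintro ⟨a, ⟨haU, hdet⟩, rfl⟩
    rw [Matrix.det_of_isUpperTriangular (fun i j h => haU i j h), Finset.prod_ne_zero_iff] at hdet
    refine ⟨isStrictLower_lowerPart _, fun i j hj => ?_, fun p hp => ?_, fun p hp i hi => ?_⟩
    · rw [lowerPart_apply, mul_vmat_apply_of_notMem hj, ite_self]
    · rw [lowerPart_apply, if_pos (hSP.lt hp), mul_vmat_apply_of_mem hSP hp]
      exact hdet p.2 (Finset.mem_univ _)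
    · rw [lowerPart_apply, if_pos ((hSP.lt hp).trans hi), mul_vmat_apply_of_mem hSP hp,
        haU i p.2 hi]
  · intro hv
    classical
    set a : Matrix (Fin n) (Fin n) F :=
      v * (vmat lam)ᵀ + Matrix.diagonal fun k => if ∃ p ∈ lam, p.2 = k then 0 else 1
    have ha_mem : ∀ {j l}, (j, l) ∈ lam → ∀ i, a i l = v i j := fun hjl i => by
      simp only [a, Matrix.add_apply, mul_vmat_transpose_apply_of_mem hSP hjl,
        Matrix.diagonal_apply]
      split_ifs with h₁ h₂
      · rw [add_zero]
      · exact absurd ⟨_, hjl, h₁.symm⟩ h₂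
      · rw [add_zero]
    have ha_not : ∀ {k}, (∀ p ∈ lam, p.2 ≠ k) → ∀ i, a i k = if i = k then 1 else 0 :=
      fun hk i => by
        simp only [a, Matrix.add_apply, mul_vmat_transpose_apply_of_forall_ne hk,
          Matrix.diagonal_apply, zero_add]
        split_ifs with h₁ h₂
        · obtain ⟨p, hp, e⟩ := h₂
          exact absurd (e.trans h₁) (hk p hp)
        all_goals rfl
    have hcases : ∀ k, (∃ j, (j, k) ∈ lam) ∨ ∀ p ∈ lam, p.2 ≠ k := fun k => by
      by_cases h : ∃ j, (j, k) ∈ lam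
      · exact Or.inl h
      · exact Or.inr fun p hp e => h ⟨p.1, e ▸ hp⟩
    have haU : a.IsUpperTriangular := fun i k (hki : k < i) => by
      rcases hcases k with ⟨j, hjk⟩ | hk
      · rw [ha_mem hjk, hv.apply_eq_zero_of_lt _ hjk i hki]
      · rw [ha_not hk, if_neg hki.ne']
    refine Finset.mem_image.mpr ⟨a, Finset.mem_filter.mpr ⟨Finset.mem_univ _,
      fun i k h => haU h, ?_⟩, ?_⟩
    · rw [Matrix.det_of_isUpperTriangular haU, Finset.prod_ne_zero_iff]
      intro k _
      rcases hcases k with ⟨j, hjk⟩ | hk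
      · rw [ha_mem hjk]; exact hv.pivot_ne_zero _ hjk
      · rw [ha_not hk, if_pos rfl]; exact one_ne_zero
    · ext i j
      rw [lowerPart_apply]
      split_ifs with hji
      · by_cases hj : j ∈ epl lam
        · obtain ⟨l, hjl⟩ := mem_epl.mp hj
          rw [mul_vmat_apply_of_mem hSP hjl, ha_mem hjl]
        · rw [mul_vmat_apply_of_notMem hj, hv.apply_eq_zero_of_notMem i j hj]
      · exact (hv.strictLower i j hji).symm

end Oset

section Orbits

variable {F : Type*} [Field F] [Fintype F] [DecidableEq F] {K : Finset (Fin n)}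
  {lam lam' : Finset (Fin n × Fin n)} {P P₀ : Finset (Fin n × Fin n)}
  {v w w' g : Matrix (Fin n) (Fin n) F}

def orbit (P : Finset (Fin n × Fin n)) (w : Matrix (Fin n) (Fin n) F) :
    Finset (Matrix (Fin n) (Fin n) F) :=
  (patternGroup P).image (lowerMul w)

lemma mem_orbit : v ∈ orbit P w ↔ ∃ b, InPattern P b ∧ lowerMul w b = v := by
  simp [orbit]

lemma IsStrictLower.mem_orbit_lowerMul (hv : IsStrictLower v) (hP : IsPattern P)
    {b : Matrix (Fin n) (Fin n) F} (hb : InPattern P b) : v ∈ orbit P (lowerMul v b) := by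
  obtain ⟨c, hc, hbc, -⟩ := hb.exists_inv hP
  exact mem_orbit.mpr ⟨c, hc, by
    rw [lowerMul_lowerMul v (hc.isUnitriangular hP.1).1, hbc, hv.lowerMul_one]⟩

/-- Orbit–stabilizer: each fiber of `b ↦ w · b` on `patternGroup P` is a coset of the
stabilizer `patternGroup P₀`. -/
lemma card_orbit_mul_card_pow (hw : IsStrictLower w) (hP : IsPattern P) (hsub : P₀ ⊆ P)
    (hstab : ∀ s, InPattern P s → (lowerMul w s = w ↔ InPattern P₀ s)) :
    (orbit P w).card * Fintype.card F ^ P₀.card = Fintype.card F ^ P.card := by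
  rw [← card_patternGroup hP.1, ← card_patternGroup fun p hp => hP.1 p (hsub hp),
    Finset.card_eq_sum_card_fiberwise (f := lowerMul w) (t := orbit P w)
      fun b hb => Finset.mem_image_of_mem _ hb,
    Finset.sum_const_nat fun u hu => ?_, mul_comm]
  obtain ⟨b₀, hb₀, rfl⟩ := mem_orbit.mp hu
  obtain ⟨c₀, hc₀, hbc, hcb⟩ := hb₀.exists_inv hP
  have hup : ∀ {s : Matrix (Fin n) (Fin n) F}, InPattern P s → s.IsUpperTriangular :=
    fun hs => (hs.isUnitriangular hP.1).1
  symm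
  refine Finset.card_bij' (fun s _ => s * b₀) (fun b _ => b * c₀) (fun s hs => ?_)
    (fun b hb => ?_) (fun s _ => by rw [Matrix.mul_assoc, hbc, Matrix.mul_one])
    (fun b _ => by rw [Matrix.mul_assoc, hcb, Matrix.mul_one])
  · have hs := mem_patternGroup.mp hs
    refine Finset.mem_filter.mpr ⟨mem_patternGroup.mpr ((hs.mono hsub).mul hP hb₀), ?_⟩
    rw [← lowerMul_lowerMul _ (hup hb₀), ((hstab s (hs.mono hsub)).mpr hs)]
  · obtain ⟨hb, hbw⟩ := Finset.mem_filter.mp hb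
    have hb := mem_patternGroup.mp hb
    refine mem_patternGroup.mpr ((hstab _ (hb.mul hP hc₀)).mp ?_)
    rw [← lowerMul_lowerMul _ (hup hc₀), hbw, lowerMul_lowerMul _ (hup hc₀), hbc,
      hw.lowerMul_one]

lemma IsNormalForm.card_orbit_colPattern (hw : IsNormalForm lam w) (hSP : IsSP n lam)
    (hepl : epl lam ⊆ K) :
    (orbit (colPattern K) w).card = Fintype.card F ^ (nstself lam + nst lam (K \ epl lam)) *
      (orbit (colPattern K \ nestingPositions K lam) w).card := by
  have hfull := card_orbit_mul_card_pow hw.strictLower isPattern_colPattern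
    (P₀ := colPattern K \ activePositions K lam) Finset.sdiff_subset
    fun s hs => hw.lowerMul_eq_self_iff hSP hs
  have hsmall := card_orbit_mul_card_pow hw.strictLower isPattern_colPattern_sdiff_nestingPositions
    (P₀ := colPattern K \ activePositions K lam)
    (Finset.sdiff_subset_sdiff subset_rfl nestingPositions_subset_activePositions)
    fun s hs => hw.lowerMul_eq_self_iff hSP (hs.mono Finset.sdiff_subset)
  have hsub : nestingPositions K lam ⊆ colPattern K := Finset.filter_subset _ _
  rw [← Finset.card_sdiff_add_card_eq_card hsub, pow_add, ← hsmall,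
    card_nestingPositions hSP hepl] at hfull
  refine Nat.eq_of_mul_eq_mul_right
    (pow_pos (Fintype.card_pos (α := F)) (colPattern K \ activePositions K lam).card) ?_
  rw [hfull]
  ring

lemma IsNormalForm.eq_of_mem_orbit (hw : IsNormalForm lam w) (hw' : IsNormalForm lam' w')
    (hSP : IsSP n lam) (hSP' : IsSP n lam') (hP : IsPattern P) (hv : v ∈ orbit P w)
    (hv' : v ∈ orbit P w') : lam' = lam ∧ w' = w := by
  obtain ⟨b, hb, rfl⟩ := mem_orbit.mp hv
  obtain ⟨b', hb', hbv⟩ := mem_orbit.mp hv'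
  obtain ⟨c, hc, hbc, -⟩ := hb'.exists_inv hP
  refine hw.eq_of_lowerMul_eq_of_isNormalForm hw' hSP hSP'
    ((hb.isUnitriangular hP.1).mul (hc.isUnitriangular hP.1)) ?_
  rw [← lowerMul_lowerMul _ (hc.isUnitriangular hP.1).1, ← hbv,
    lowerMul_lowerMul _ (hc.isUnitriangular hP.1).1, hbc, hw'.strictLower.lowerMul_one]

lemma sum_orbit_eq_card_mul (hg : ∀ i j : Fin n, ¬ i < j → (g - 1) i j = 0)
    (hP : ∀ p ∈ P, p.1 < p.2)
    (hfix : lowerPart (g * w) = w) (θ : F → ℂ) :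
    ∑ v ∈ orbit P w, θ ((g - 1) * v).trace = (orbit P w).card * θ ((g - 1) * w).trace := by
  rw [Finset.sum_congr rfl fun v hv => ?_, Finset.sum_const, nsmul_eq_mul]
  obtain ⟨b, hb, rfl⟩ := mem_orbit.mp hv
  rw [trace_sub_one_mul_lowerMul hg hfix (hb.isUnitriangular hP)]

end Orbits

section Decomposition

variable {F : Type*} [Field F] [Fintype F] [DecidableEq F] {K : Finset (Fin n)}
  {lam : Finset (Fin n × Fin n)} {P : Finset (Fin n × Fin n)} {v w b g : Matrix (Fin n) (Fin n) F}

lemma IsNormalForm.disjoint_orbit {lam' : Finset (Fin n × Fin n)} {w' : Matrix (Fin n) (Fin n) F}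
    (hw : IsNormalForm lam w) (hw' : IsNormalForm lam' w') (hSP : IsSP n lam)
    (hSP' : IsSP n lam') (hP : IsPattern P) (hne : ¬ (lam' = lam ∧ w' = w)) :
    Disjoint (orbit P w) (orbit P w') :=
  Finset.disjoint_left.mpr fun _ hv hv' => hne (hw.eq_of_mem_orbit hw' hSP hSP' hP hv hv')

noncomputable def fixedNormalForms (lam : Finset (Fin n × Fin n))
    (g : Matrix (Fin n) (Fin n) F) : Finset (Matrix (Fin n) (Fin n) F) := by
  classical exact univ.filter fun w => IsNormalForm lam w ∧ lowerPart (g * w) = w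

lemma mem_fixedNormalForms :
    w ∈ fixedNormalForms lam g ↔ IsNormalForm lam w ∧ lowerPart (g * w) = w := by
  simp [fixedNormalForms]

lemma filter_psi_eq_biUnion (hg : g.IsUpperTriangular) :
    univ.filter (fun v : Matrix (Fin n) (Fin n) F => (∀ i j, ¬ j < i → v i j = 0) ∧
      (∀ i j, v i j ≠ 0 → j ∈ K) ∧ lowerPart (g * v) = v) =
      ((univ.filter fun lam => IsSP n lam ∧ epl lam ⊆ K).sigma
        fun lam => fixedNormalForms lam g).biUnion fun x => orbit (colPattern K) x.2 := by
  ext v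
  simp only [Finset.mem_filter, Finset.mem_univ, true_and, Finset.mem_biUnion,
    Finset.mem_sigma, mem_fixedNormalForms, Sigma.exists]
  constructor
  · rintro ⟨hvs, hvK, hfix⟩
    obtain ⟨lam, b, hSP, hb, hw⟩ := exists_isNormalForm_lowerMul hvK
    have hbU := (hb.isUnitriangular isPattern_colPattern.1).1
    refine ⟨lam, lowerMul v b, ⟨⟨hSP, fun j hj => ?_⟩, hw, lowerPart_mul_lowerMul hg hfix hbU⟩,
      IsStrictLower.mem_orbit_lowerMul hvs isPattern_colPattern hb⟩
    obtain ⟨l, hjl⟩ := mem_epl.mp hj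
    exact mem_of_lowerMul_apply_ne_zero hvK (fun i j => hb.apply_eq_zero_of_notMem)
      (hw.pivot_ne_zero _ hjl)
  · rintro ⟨lam, w, ⟨⟨hSP, hepl⟩, hw, hfix⟩, hv⟩
    obtain ⟨b, hb, rfl⟩ := mem_orbit.mp hv
    exact ⟨isStrictLower_lowerMul w b, fun i j => mem_of_lowerMul_apply_ne_zero
      (fun i j => hw.mem_of_ne_zero hepl) (fun i j => hb.apply_eq_zero_of_notMem),
      lowerPart_mul_lowerMul hg hfix (hb.isUnitriangular isPattern_colPattern.1).1⟩

lemma psi_eq_sum_card_orbit (θ : F → ℂ) (hg : ∀ i j : Fin n, ¬ i < j → (g - 1) i j = 0) :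
    Psi θ K g = ∑ lam ∈ univ.filter (fun lam => IsSP n lam ∧ epl lam ⊆ K),
      ∑ w ∈ fixedNormalForms lam g,
        ((orbit (colPattern K) w).card : ℂ) * θ ((g - 1) * w).trace := by
  rw [Psi, filter_psi_eq_biUnion (isUpperTriangular_of_sub_one hg), Finset.sum_biUnion,
    Finset.sum_sigma]
  · exact Finset.sum_congr rfl fun lam _ => Finset.sum_congr rfl fun w hw =>
      sum_orbit_eq_card_mul hg isPattern_colPattern.1 (mem_fixedNormalForms.mp hw).2 θ
  · intro x hx y hy hxy
    simp only [Finset.coe_sigma, Set.mem_sigma_iff, Finset.coe_filter, Finset.mem_coe,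
      mem_fixedNormalForms] at hx hy
    exact hx.2.1.disjoint_orbit hy.2.1 hx.1.2.1 hy.1.2.1 isPattern_colPattern
      fun h => hxy (Sigma.ext h.1.symm (heq_of_eq h.2.symm))

lemma filter_Oset_eq_biUnion (hg : g.IsUpperTriangular) (hSP : IsSP n lam)
    (hepl : epl lam ⊆ K) :
    (Oset lam).filter (fun v : Matrix (Fin n) (Fin n) F => lowerPart (g * v) = v) =
      (fixedNormalForms lam g).biUnion (orbit (colPattern K \ nestingPositions K lam)) := by
  ext v
  simp only [Finset.mem_filter, mem_Oset_iff hSP, Finset.mem_biUnion, mem_fixedNormalForms]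
  constructor
  · rintro ⟨hv, hfix⟩
    obtain ⟨mu, b, hSPmu, hb, hw⟩ :=
      exists_isNormalForm_lowerMul (K := K) fun i j => hv.mem_of_ne_zero hepl
    obtain ⟨c, hc, hcv⟩ := mem_orbit.mp
      (hv.strictLower.mem_orbit_lowerMul isPattern_colPattern hb)
    obtain rfl := hw.eq_of_isPivotForm_lowerMul hSPmu hSP
      (hc.isUnitriangular isPattern_colPattern.1) (by rwa [hcv])
    refine ⟨lowerMul v b, ⟨hw, lowerPart_mul_lowerMul hg hfix
      (hb.isUnitriangular isPattern_colPattern.1).1⟩, mem_orbit.mpr ⟨c, ?_, hcv⟩⟩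
    exact hw.inPattern_of_isPivotForm_lowerMul hSP hc (by rwa [hcv])
  · rintro ⟨w, ⟨hw, hfix⟩, hv⟩
    obtain ⟨b, hb, rfl⟩ := mem_orbit.mp hv
    exact ⟨hw.isPivotForm_lowerMul hSP hb, lowerPart_mul_lowerMul hg hfix
      (hb.isUnitriangular isPattern_colPattern_sdiff_nestingPositions.1).1⟩

lemma xchar_eq_sum_card_orbit (θ : F → ℂ) (hg : ∀ i j : Fin n, ¬ i < j → (g - 1) i j = 0)
    (hSP : IsSP n lam) (hepl : epl lam ⊆ K) :
    Xchar θ lam g = ∑ w ∈ fixedNormalForms lam g,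
      ((orbit (colPattern K \ nestingPositions K lam) w).card : ℂ) * θ ((g - 1) * w).trace := by
  have hP := isPattern_colPattern_sdiff_nestingPositions (K := K) (lam := lam)
  rw [Xchar, filter_Oset_eq_biUnion (isUpperTriangular_of_sub_one hg) hSP hepl,
    Finset.sum_biUnion]
  · exact Finset.sum_congr rfl fun w hw =>
      sum_orbit_eq_card_mul hg hP.1 (mem_fixedNormalForms.mp hw).2 θ
  · intro w hw w' hw' hne
    exact (mem_fixedNormalForms.mp hw).1.disjoint_orbit (mem_fixedNormalForms.mp hw').1 hSP hSP
      hP fun h => hne h.2.symm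

end Decomposition

end SetPartitionSupercharacter

open SetPartitionSupercharacter

theorem stmt7_general (n : ℕ) (θ : F → ℂ) (K : Finset (Fin n)) (g : Matrix (Fin n) (Fin n) F)
    (hg : ∀ i j : Fin n, ¬ i < j → (g - 1) i j = 0) :
    Psi θ K g =
      ∑ lam ∈ (univ : Finset (Finset (Fin n × Fin n))).filter
          (fun lam => IsSP n lam ∧ epl lam ⊆ K),
        (Fintype.card F : ℂ) ^ (nstself lam + nst lam (K \ epl lam)) * Xchar θ lam g := by
  rw [psi_eq_sum_card_orbit θ hg]
  refine Finset.sum_congr rfl fun lam hlam => ?_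
  obtain ⟨hSP, hepl⟩ := (Finset.mem_filter.mp hlam).2
  rw [xchar_eq_sum_card_orbit θ hg hSP hepl, Finset.mul_sum]
  refine Finset.sum_congr rfl fun w hw => ?_
  rw [(mem_fixedNormalForms.mp hw).1.card_orbit_colPattern hSP hepl]
  push_cast
  ring

theorem stmt7 (n : ℕ) (θ : F → ℂ) (hθadd : ∀ x y, θ (x + y) = θ x * θ y)
    (hθne : ∃ x, θ x ≠ 1) (K : Finset (Fin n)) (g : Matrix (Fin n) (Fin n) F)
    (hg : ∀ i j : Fin n, ¬ i < j → (g - 1) i j = 0) :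
    Psi θ K g =
      ∑ lam ∈ (univ : Finset (Finset (Fin n × Fin n))).filter
          (fun lam => IsSP n lam ∧ epl lam ⊆ K),
        (Fintype.card F : ℂ) ^ (nstself lam + nst lam (K \ epl lam)) * Xchar θ lam g :=
  stmt7_general n θ K g hg
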